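/- Let D[u] ∝ exp(-λ|t/2 - u|) on u ∈ {0,...,t}, and for x ∈ {0,...,m-1} define D_x[x+um] = D[u]. Suppose x1' + x2' = x1 + x2 + m with all four values in {0,...,m-1}. If z = x1 + x2 + vm for an integer v ∈ [0, t], then (D_{x1} * D_{x2})[z] ≤ e^λ · (D_{x1'} * D_{x2'})[z] + D[v]·D[0] and (D_{x1'} * D_{x2'})[z] ≤ e^λ · (D_{x1} * D_{x2})[z]. -/

import Mathlib

/-- The truncated discrete Laplace weight `D[u] = exp(-λ|t/2 - u|)/Z` on
`u ∈ {0,...,t}`, where `Z` is the normalizing constant. -/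
noncomputable def Dmass (lam : ℝ) (t u : ℕ) : ℝ :=
  Real.exp (-lam * |(t : ℝ) / 2 - u|) /
    ∑ w ∈ Finset.range (t + 1), Real.exp (-lam * |(t : ℝ) / 2 - w|)

/-- `D_x`: the distribution placing mass `D[u]` on `x + u·m` for `u ∈ {0,...,t}`. -/
noncomputable def Dshift (lam : ℝ) (t m x : ℕ) (z : ℤ) : ℝ :=
  ∑ u ∈ Finset.range (t + 1), if z = (x : ℤ) + u * m then Dmass lam t u else 0

/-- Convolution of mass functions on `ℤ`: `(A*B)[z] = ∑_w A[w]·B[z-w]`. -/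
noncomputable def convZ (A B : ℤ → ℝ) (z : ℤ) : ℝ := ∑' w : ℤ, A w * B (z - w)

/-!
For `n ≤ t`, `(D_x * D_y)[x + y + n·m] = ∑_{a + b = n} D[a]·D[b]`, the bound `n ≤ t` making the
truncation of `D` invisible. Since `x1 + x2 + v·m = x1' + x2' + (v - 1)·m`, the two convolutions
are the antidiagonal sums at `v` and at `v - 1` (zero when `v = 0`). Shifting an index by one
changes `D` by a factor at most `e^λ`, so the two antidiagonals match term by term, up to the
extra term `D[v]·D[0]`.
-/

open Finset

section AntidiagonalSums

variable {w : ℕ → ℝ} {c : ℝ}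

theorem sum_antidiagonal_succ_le (hw : ∀ n, 0 ≤ w n) (hc : ∀ n, w (n + 1) ≤ c * w n) (k : ℕ) :
    ∑ p ∈ antidiagonal (k + 1), w p.1 * w p.2
      ≤ c * ∑ p ∈ antidiagonal k, w p.1 * w p.2 + w (k + 1) * w 0 := by
  rw [Nat.sum_antidiagonal_succ', add_comm, mul_sum]
  refine add_le_add (sum_le_sum fun p _ => ?_) le_rfl
  calc w p.1 * w (p.2 + 1) ≤ w p.1 * (c * w p.2) := mul_le_mul_of_nonneg_left (hc _) (hw _)
    _ = c * (w p.1 * w p.2) := by ring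

theorem sum_antidiagonal_le_succ (hw : ∀ n, 0 ≤ w n) (hc₀ : 0 ≤ c)
    (hc : ∀ n, w n ≤ c * w (n + 1)) (k : ℕ) :
    ∑ p ∈ antidiagonal k, w p.1 * w p.2 ≤ c * ∑ p ∈ antidiagonal (k + 1), w p.1 * w p.2 := by
  rw [Nat.sum_antidiagonal_succ', mul_add, mul_sum]
  refine le_add_of_nonneg_of_le (by have := hw 0; have := hw (k + 1); positivity)
    (sum_le_sum fun p _ => ?_)
  calc w p.1 * w p.2 ≤ w p.1 * (c * w (p.2 + 1)) := mul_le_mul_of_nonneg_left (hc _) (hw _)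
    _ = c * (w p.1 * w (p.2 + 1)) := by ring

end AntidiagonalSums

theorem sum_range_sum_range_ite_add_eq (w : ℕ → ℝ) {t n : ℕ} (hn : n ≤ t) :
    ∑ a ∈ range (t + 1), ∑ b ∈ range (t + 1),
        (if (a : ℤ) + b = n then w a * w b else 0)
      = ∑ p ∈ antidiagonal n, w p.1 * w p.2 := by
  rw [← sum_product' (f := fun (a b : ℕ) => if (a : ℤ) + b = n then w a * w b else 0),
    ← sum_filter]
  refine sum_congr ?_ fun _ _ => rfl
  ext ⟨a, b⟩
  simp only [mem_filter, mem_product, mem_range, HasAntidiagonal.mem_antidiagonal]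
  omega

theorem convZ_sum_ite_eq {ι : Type*} (s : Finset ι) (e : ι → ℤ) (g : ι → ℝ) (B : ℤ → ℝ) (z : ℤ) :
    convZ (fun w => ∑ i ∈ s, if w = e i then g i else 0) B z = ∑ i ∈ s, g i * B (z - e i) := by
  unfold convZ
  simp_rw [sum_mul, ite_mul, zero_mul]
  rw [Summable.tsum_finsetSum fun i _ => summable_of_ne_finset_zero (s := {e i}) (by simp_all)]
  refine sum_congr rfl fun i _ => ?_
  rw [tsum_eq_single (e i) (by simp_all)]
  simp

section Laplace

variable {lam : ℝ} {t m : ℕ}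

theorem Dmass_pos (u : ℕ) : 0 < Dmass lam t u :=
  div_pos (Real.exp_pos _) (sum_pos (fun _ _ => Real.exp_pos _) nonempty_range_add_one)

theorem Dmass_le_exp_mul (hlam : 0 ≤ lam) (a b : ℕ) :
    Dmass lam t a ≤ Real.exp (lam * |(a : ℝ) - b|) * Dmass lam t b := by
  unfold Dmass
  rw [mul_div_assoc', ← Real.exp_add]
  gcongr
  have key : |(t : ℝ) / 2 - b| - |(t : ℝ) / 2 - a| ≤ |(a : ℝ) - b| := by
    simpa using abs_sub_abs_le_abs_sub ((t : ℝ) / 2 - b) ((t : ℝ) / 2 - a)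
  linarith [mul_le_mul_of_nonneg_left key hlam]

theorem Dmass_succ_le (hlam : 0 ≤ lam) (n : ℕ) :
    Dmass lam t (n + 1) ≤ Real.exp lam * Dmass lam t n := by
  simpa using Dmass_le_exp_mul (t := t) hlam (n + 1) n

theorem Dmass_le_succ (hlam : 0 ≤ lam) (n : ℕ) :
    Dmass lam t n ≤ Real.exp lam * Dmass lam t (n + 1) := by
  simpa using Dmass_le_exp_mul (t := t) hlam n (n + 1)

theorem convZ_Dshift_eq_sum (hm : (m : ℤ) ≠ 0) (x y : ℕ) (n : ℤ) :
    convZ (Dshift lam t m x) (Dshift lam t m y) (x + y + n * m)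
      = ∑ a ∈ range (t + 1), ∑ b ∈ range (t + 1),
          if (a : ℤ) + b = n then Dmass lam t a * Dmass lam t b else 0 := by
  rw [show Dshift lam t m x = fun z : ℤ =>
      ∑ a ∈ range (t + 1), if z = x + a * m then Dmass lam t a else 0 from rfl, convZ_sum_ite_eq]
  refine sum_congr rfl fun a _ => ?_
  rw [Dshift, mul_sum]
  refine sum_congr rfl fun b _ => ?_
  have hcond : x + y + n * m - (x + a * m) = y + (b : ℤ) * m ↔ (a : ℤ) + b = n := by
    refine Iff.trans ?_ (mul_left_inj' hm)
    constructor <;> intro h <;> linarith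
  simp only [hcond, mul_ite, mul_zero]

theorem convZ_Dshift_of_le (hm : (m : ℤ) ≠ 0) (x y : ℕ) {n : ℕ} (hn : n ≤ t) :
    convZ (Dshift lam t m x) (Dshift lam t m y) (x + y + n * m)
      = ∑ p ∈ antidiagonal n, Dmass lam t p.1 * Dmass lam t p.2 := by
  rw [convZ_Dshift_eq_sum hm, sum_range_sum_range_ite_add_eq _ hn]

theorem convZ_Dshift_of_neg (hm : (m : ℤ) ≠ 0) (x y : ℕ) {n : ℤ} (hn : n < 0) :
    convZ (Dshift lam t m x) (Dshift lam t m y) (x + y + n * m) = 0 := by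
  rw [convZ_Dshift_eq_sum hm]
  exact sum_eq_zero fun a _ => sum_eq_zero fun b _ => if_neg (by omega)

end Laplace

theorem stmt8_general (lam : ℝ) (h0 : 0 < lam) (t m : ℕ)
    (hm : 2 ≤ m) (x1 x2 x1' x2' : ℕ)
    (hsum : x1' + x2' = x1 + x2 + m)
    (v : ℕ) (hv : v ≤ t) (z : ℤ) (hz : z = (x1 : ℤ) + x2 + v * m) :
    convZ (Dshift lam t m x1) (Dshift lam t m x2) z
      ≤ Real.exp lam * convZ (Dshift lam t m x1') (Dshift lam t m x2') z
        + Dmass lam t v * Dmass lam t 0 ∧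
    convZ (Dshift lam t m x1') (Dshift lam t m x2') z
      ≤ Real.exp lam * convZ (Dshift lam t m x1) (Dshift lam t m x2) z := by
  have hm0 : (m : ℤ) ≠ 0 := by omega
  have hsum' : (x1' : ℤ) + x2' = x1 + x2 + m := by exact_mod_cast hsum
  have hw : ∀ n, 0 ≤ Dmass lam t n := fun n => (Dmass_pos n).le
  subst hz
  rw [convZ_Dshift_of_le hm0 x1 x2 hv]
  cases v with
  | zero =>
    rw [show (x1 : ℤ) + x2 + ((0 : ℕ) : ℤ) * m = x1' + x2' + (-1) * m by push_cast; linarith,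
      convZ_Dshift_of_neg hm0 x1' x2' (by norm_num)]
    simpa using mul_nonneg (Real.exp_pos lam).le (mul_nonneg (hw 0) (hw 0))
  | succ k =>
    rw [show (x1 : ℤ) + x2 + ((k + 1 : ℕ) : ℤ) * m = x1' + x2' + (k : ℕ) * m by push_cast; linarith,
      convZ_Dshift_of_le hm0 x1' x2' (by omega : k ≤ t)]
    exact ⟨sum_antidiagonal_succ_le hw (Dmass_succ_le h0.le) k,
      sum_antidiagonal_le_succ hw (Real.exp_pos lam).le (Dmass_le_succ h0.le) k⟩

/-- if `x1' + x2' = x1 + x2 + m` (all four in `{0,...,m-1}`) and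
`z = x1 + x2 + v·m` for an integer `v ∈ [0, t]`, then
`(D_{x1} * D_{x2})[z] ≤ e^λ (D_{x1'} * D_{x2'})[z] + D[v]·D[0]` and
`(D_{x1'} * D_{x2'})[z] ≤ e^λ (D_{x1} * D_{x2})[z]`. -/
theorem stmt8 (lam : ℝ) (h0 : 0 < lam) (h1 : lam < 1) (t m : ℕ) (hodd : Odd t)
    (hm : 2 ≤ m) (x1 x2 x1' x2' : ℕ)
    (hx1 : x1 < m) (hx2 : x2 < m) (hx1' : x1' < m) (hx2' : x2' < m)
    (hsum : x1' + x2' = x1 + x2 + m)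
    (v : ℕ) (hv : v ≤ t) (z : ℤ) (hz : z = (x1 : ℤ) + x2 + v * m) :
    convZ (Dshift lam t m x1) (Dshift lam t m x2) z
      ≤ Real.exp lam * convZ (Dshift lam t m x1') (Dshift lam t m x2') z
        + Dmass lam t v * Dmass lam t 0 ∧
    convZ (Dshift lam t m x1') (Dshift lam t m x2') z
      ≤ Real.exp lam * convZ (Dshift lam t m x1) (Dshift lam t m x2) z :=
  stmt8_general lam h0 t m hm x1 x2 x1' x2' hsum v hv z hz
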